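/- Let M be an almost paracontact metric manifold which is a para-CR manifold (equivalently τ-normal) with autoparallel Reeb vector field (∇_ζζ = 0). Then there exists a linear connection ∇̃ on M making the almost paracontact metric structure parallel: ∇̃ψ = 0, ∇̃ζ = 0, ∇̃τ = 0 and ∇̃g = 0. -/
import Mathlib


noncomputable section

/-!
An abstract model of smooth geometry: `F` plays the role of the algebra of
smooth real-valued functions on a manifold `M`, `V` plays the role of the
`C^∞(M)`-module of smooth vector fields on `M` (with its Lie bracket), and
`D X f` represents the directional derivative of the function `f` along the
vector field `X`.
-/
structure SmoothSetting (F V : Type*) [CommRing F] [Algebra ℝ F]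
    [LieRing V] [Module F V] [Module ℝ V] [IsScalarTower ℝ F V] where
  D : V → F → F
  D_add : ∀ (X : V) (f g : F), D X (f + g) = D X f + D X g
  D_mul : ∀ (X : V) (f g : F), D X (f * g) = f * D X g + g * D X f
  D_addX : ∀ (X Y : V) (f : F), D (X + Y) f = D X f + D Y f
  D_smulX : ∀ (f : F) (X : V) (k : F), D (f • X) k = f * D X k
  D_bracket : ∀ (X Y : V) (f : F), D ⁅X, Y⁆ f = D X (D Y f) - D Y (D X f)
  bracket_smul : ∀ (f : F) (X Y : V), ⁅X, f • Y⁆ = f • ⁅X, Y⁆ + D X f • Y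

/-- An almost paracontact metric manifold, modelled abstractly: a quadruple
`(ψ, ζ, τ, g)` where `ψ` is a `(1,1)`-tensor field, `ζ` a vector field, `τ` a
one-form and `g` a pseudo-Riemannian metric, satisfying `ψ² = Id - τ ⊗ ζ`,
`τ(ζ) = 1` and `g(ψX, ψY) = -g(X,Y) + τ(X)τ(Y)` (together with the standard
consequent identities `ψζ = 0`, `τ ∘ ψ = 0`), and the Levi-Civita connection
`nabla` of `g` (characterised by metricity and torsion-freeness). -/
structure APCMS (F V : Type*) [CommRing F] [Algebra ℝ F]
    [LieRing V] [Module F V] [Module ℝ V] [IsScalarTower ℝ F V]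
    extends SmoothSetting F V where
  psi : V → V
  zeta : V
  tau : V → F
  g : V → V → F
  psi_add : ∀ X Y : V, psi (X + Y) = psi X + psi Y
  psi_smul : ∀ (f : F) (X : V), psi (f • X) = f • psi X
  tau_add : ∀ X Y : V, tau (X + Y) = tau X + tau Y
  tau_smul : ∀ (f : F) (X : V), tau (f • X) = f * tau X
  g_addX : ∀ X Y Z : V, g (X + Y) Z = g X Z + g Y Z
  g_smulX : ∀ (f : F) (X Y : V), g (f • X) Y = f * g X Y
  g_symm : ∀ X Y : V, g X Y = g Y X
  g_nondeg : ∀ X : V, (∀ Y : V, g X Y = 0) → X = 0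
  psi_psi : ∀ X : V, psi (psi X) = X - tau X • zeta
  tau_zeta : tau zeta = 1
  psi_zeta : psi zeta = 0
  tau_psi : ∀ X : V, tau (psi X) = 0
  g_psi_psi : ∀ X Y : V, g (psi X) (psi Y) = - g X Y + tau X * tau Y
  nabla : V → V → V
  nabla_addX : ∀ X Y Z : V, nabla (X + Y) Z = nabla X Z + nabla Y Z
  nabla_smulX : ∀ (f : F) (X Y : V), nabla (f • X) Y = f • nabla X Y
  nabla_addY : ∀ X Y Z : V, nabla X (Y + Z) = nabla X Y + nabla X Z
  nabla_leibniz : ∀ (X : V) (f : F) (Y : V),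
    nabla X (f • Y) = D X f • Y + f • nabla X Y
  nabla_torsion_free : ∀ X Y : V, nabla X Y - nabla Y X = ⁅X, Y⁆
  nabla_metric : ∀ X Y Z : V,
    D X (g Y Z) = g (nabla X Y) Z + g Y (nabla X Z)

namespace APCMS

variable {F V : Type*} [CommRing F] [Algebra ℝ F]
  [LieRing V] [Module F V] [Module ℝ V] [IsScalarTower ℝ F V]
variable (A : APCMS F V)

/-- The fundamental form `Ψ(X,Y) = g(X, ψY)`. -/
def Psi2 (X Y : V) : F := A.g X (A.psi Y)

/-- The exterior derivative `dτ`, via the coboundary formula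
`2 dτ(X,Y) = X τ(Y) - Y τ(X) - τ([X,Y])`. -/
def dTau (X Y : V) : F :=
  ((1:ℝ)/2) • (A.D X (A.tau Y) - A.D Y (A.tau X) - A.tau ⁅X, Y⁆)

/-- The exterior derivative `dΨ`, via the coboundary formula. -/
def dPsi (X Y Z : V) : F :=
  ((1:ℝ)/3) • (A.D X (A.Psi2 Y Z) + A.D Y (A.Psi2 Z X) + A.D Z (A.Psi2 X Y)
    - A.Psi2 ⁅X, Y⁆ Z - A.Psi2 ⁅Y, Z⁆ X - A.Psi2 ⁅Z, X⁆ Y)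

/-- The Lie derivative `(L_ζ τ)(X)`. -/
def lieTau (X : V) : F := A.D A.zeta (A.tau X) - A.tau ⁅A.zeta, X⁆

/-- The Lie derivative `(L_ζ ψ)(X)`. -/
def liePsi (X : V) : V := ⁅A.zeta, A.psi X⁆ - A.psi ⁅A.zeta, X⁆

/-- The tensor field `h = (1/2) L_ζ ψ`. -/
def h (X : V) : V := ((1:ℝ)/2) • A.liePsi X

/-- The Nijenhuis torsion `[ψ,ψ](X,Y)`. -/
def nijPsi (X Y : V) : V :=
  A.psi (A.psi ⁅X, Y⁆) + ⁅A.psi X, A.psi Y⁆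
    - A.psi ⁅A.psi X, Y⁆ - A.psi ⁅X, A.psi Y⁆

/-- The tensor `K⁽¹⁾(X,Y) = [ψ,ψ](X,Y) - 2 dτ(X,Y) ζ`. -/
def K1 (X Y : V) : V := A.nijPsi X Y - (2 * A.dTau X Y) • A.zeta

/-- The tensor `K⁽²⁾(X,Y) = (L_{ψX} τ)(Y) - (L_{ψY} τ)(X)`. -/
def K2 (X Y : V) : F :=
  (A.D (A.psi X) (A.tau Y) - A.tau ⁅A.psi X, Y⁆)
    - (A.D (A.psi Y) (A.tau X) - A.tau ⁅A.psi Y, X⁆)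

/-- The covariant derivative `(∇_X ψ)(Y)`. -/
def covPsi (X Y : V) : V := A.nabla X (A.psi Y) - A.psi (A.nabla X Y)

/-- `M` is `τ`-normal: `K⁽¹⁾(X,Y) = 0` whenever `τ(X) = τ(Y) = 0`. -/
def TauNormal : Prop := ∀ X Y : V, A.tau X = 0 → A.tau Y = 0 → A.K1 X Y = 0

/-- `M` is normal: `K⁽¹⁾ = 0` identically. -/
def Normal : Prop := ∀ X Y : V, A.K1 X Y = 0

/-- `X` is a section of the `+1`-eigendistribution `V⁺` of `ψ`. -/
def Vp (X : V) : Prop := A.psi X = X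

/-- `X` is a section of the `-1`-eigendistribution `V⁻` of `ψ`. -/
def Vm (X : V) : Prop := A.psi X = -X

/-- `M` is a para-CR manifold: both eigendistributions `V⁺`, `V⁻` of `ψ` are
involutive. -/
def ParaCR : Prop :=
  (∀ X Y : V, A.Vp X → A.Vp Y → A.Vp ⁅X, Y⁆) ∧
  (∀ X Y : V, A.Vm X → A.Vm Y → A.Vm ⁅X, Y⁆)

/-- The characteristic form `τ` is a contact form: `dτ` is nondegenerate on
the kernel distribution of `τ`. -/
def IsContact : Prop :=
  ∀ X : V, A.tau X = 0 → (∀ Y : V, A.dTau X Y = 0) → X = 0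

/-- The Reeb vector field of the contact form `τ` equals the characteristic
vector field `ζ` (i.e. `τ(ζ) = 1`, which holds by definition, and
`ι_ζ dτ = 0`). -/
def ReebEqZeta : Prop := ∀ X : V, A.dTau A.zeta X = 0

/-- The Pang invariant `Π(X,Y) = (L_X L_Y τ)(ζ) = -τ([[ζ,X],Y])`; restricted
to sections of `V⁺` (resp. `V⁻`) it is the Pang invariant `Π₊` (resp. `Π₋`)
of the Legendrian foliation determined by `V⁺` (resp. `V⁻`). -/
def Pang (X Y : V) : F := - A.tau ⁅⁅A.zeta, X⁆, Y⁆

/-- The tensor field `χ(X,Y) = dτ(hX, ψY)`. -/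
def chi (X Y : V) : F := A.dTau (A.h X) (A.psi Y)

/-- `Dc` is a linear connection on `M`. -/
def IsConnection (Dc : V → V → V) : Prop :=
  (∀ X Y Z : V, Dc (X + Y) Z = Dc X Z + Dc Y Z) ∧
  (∀ (f : F) (X Y : V), Dc (f • X) Y = f • Dc X Y) ∧
  (∀ X Y Z : V, Dc X (Y + Z) = Dc X Y + Dc X Z) ∧
  (∀ (X : V) (f : F) (Y : V), Dc X (f • Y) = A.D X f • Y + f • Dc X Y)

/-- `Dc` is a parallelization: a linear connection making the whole almost
paracontact metric structure parallel: `∇̃ψ = 0`, `∇̃ζ = 0`, `∇̃τ = 0`,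
`∇̃g = 0`. -/
def IsParallelization (Dc : V → V → V) : Prop :=
  A.IsConnection Dc ∧
  (∀ X Y : V, Dc X (A.psi Y) = A.psi (Dc X Y)) ∧
  (∀ X : V, Dc X A.zeta = 0) ∧
  (∀ X Y : V, A.D X (A.tau Y) = A.tau (Dc X Y)) ∧
  (∀ X Y Z : V, A.D X (A.g Y Z) = A.g (Dc X Y) Z + A.g Y (Dc X Z))

end APCMS

namespace APCMS

variable {F V : Type*} [CommRing F] [Algebra ℝ F]
  [LieRing V] [Module F V] [Module ℝ V] [IsScalarTower ℝ F V]

/-- One half, as an element of `F`. -/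
def hf : F := algebraMap ℝ F (1/2)

lemma hf_add_hf : (hf : F) + hf = 1 := by
  rw [hf, ← map_add]; norm_num

lemma half_cancel {a : F} (h : a + a = 0) : a = 0 := by
  calc a = ((hf : F) + hf) * a := by rw [hf_add_hf, one_mul]
    _ = hf * (a + a) := by ring
    _ = 0 := by rw [h, mul_zero]

lemma hf_two (v : V) : (hf : F) • (v + v) = v := by
  rw [smul_add, ← add_smul, hf_add_hf, one_smul]

lemma hf_combine (u v : V) : (hf : F) • (u + v) + (hf : F) • (u - v) = u := by
  rw [smul_add, smul_sub]
  have h : (hf : F) • u + (hf : F) • v + ((hf : F) • u - (hf : F) • v)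
      = ((hf : F) + hf) • u := by rw [add_smul]; abel
  rw [h, hf_add_hf, one_smul]

variable (A : APCMS F V)

lemma tau_zero : A.tau 0 = 0 := by
  have h := A.tau_add 0 0
  rw [add_zero] at h
  exact (left_eq_add.mp h)

lemma tau_neg (X : V) : A.tau (-X) = - A.tau X := by
  have h := A.tau_add X (-X)
  rw [add_neg_cancel, A.tau_zero] at h
  exact eq_neg_of_add_eq_zero_right h.symm

lemma tau_sub (X Y : V) : A.tau (X - Y) = A.tau X - A.tau Y := by
  rw [sub_eq_add_neg, A.tau_add, A.tau_neg, ← sub_eq_add_neg]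

lemma psi_zero : A.psi 0 = 0 := by
  have h := A.psi_add 0 0
  rw [add_zero] at h
  exact (left_eq_add.mp h)

lemma psi_neg (X : V) : A.psi (-X) = - A.psi X := by
  have h := A.psi_add X (-X)
  rw [add_neg_cancel, A.psi_zero] at h
  exact eq_neg_of_add_eq_zero_right h.symm

lemma psi_sub (X Y : V) : A.psi (X - Y) = A.psi X - A.psi Y := by
  rw [sub_eq_add_neg, A.psi_add, A.psi_neg, ← sub_eq_add_neg]

lemma D_zero (X : V) : A.D X 0 = 0 := by
  have h := A.D_add X 0 0
  rw [add_zero] at h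
  exact (left_eq_add.mp h)

lemma D_one (X : V) : A.D X 1 = 0 := by
  have h := A.D_mul X 1 1
  rw [mul_one, one_mul] at h
  exact (left_eq_add.mp h)

lemma g_zeroX (X : V) : A.g 0 X = 0 := by
  have h := A.g_addX 0 0 X
  rw [add_zero] at h
  exact (left_eq_add.mp h)

lemma g_zeroY (X : V) : A.g X 0 = 0 := by rw [A.g_symm, A.g_zeroX]

lemma g_negX (X Y : V) : A.g (-X) Y = - A.g X Y := by
  have h := A.g_addX X (-X) Y
  rw [add_neg_cancel, A.g_zeroX] at h
  exact eq_neg_of_add_eq_zero_right h.symm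

lemma g_negY (X Y : V) : A.g X (-Y) = - A.g X Y := by
  rw [A.g_symm, A.g_negX, A.g_symm]

lemma g_subX (X Y Z : V) : A.g (X - Y) Z = A.g X Z - A.g Y Z := by
  rw [sub_eq_add_neg, A.g_addX, A.g_negX, ← sub_eq_add_neg]

lemma g_addY (X Y Z : V) : A.g X (Y + Z) = A.g X Y + A.g X Z := by
  rw [A.g_symm, A.g_addX, A.g_symm Y X, A.g_symm Z X]

lemma g_smulY (f : F) (X Y : V) : A.g X (f • Y) = f * A.g X Y := by
  rw [A.g_symm, A.g_smulX, A.g_symm]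

lemma g_zeta_right (X : V) : A.g X A.zeta = A.tau X := by
  have h := A.g_psi_psi X A.zeta
  rw [A.psi_zeta, A.g_zeroY, A.tau_zeta, mul_one] at h
  linear_combination h

lemma g_zeta_left (X : V) : A.g A.zeta X = A.tau X := by
  rw [A.g_symm, A.g_zeta_right]

lemma nabla_zeroY (X : V) : A.nabla X 0 = 0 := by
  have h := A.nabla_addY X 0 0
  rw [add_zero] at h
  exact (left_eq_add.mp h)

lemma nabla_negY (X Y : V) : A.nabla X (-Y) = - A.nabla X Y := by
  have h := A.nabla_addY X Y (-Y)
  rw [add_neg_cancel, A.nabla_zeroY] at h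
  exact eq_neg_of_add_eq_zero_right h.symm

/-- Projection onto the `+1`-eigendistribution of `ψ`. -/
def Pp (X : V) : V := (hf : F) • (X - A.tau X • A.zeta + A.psi X)

/-- Projection onto the `-1`-eigendistribution of `ψ`. -/
def Pm (X : V) : V := (hf : F) • (X - A.tau X • A.zeta - A.psi X)

lemma tau_Pp (X : V) : A.tau (A.Pp X) = 0 := by
  simp only [Pp, A.tau_smul, A.tau_add, A.tau_sub, A.tau_smul, A.tau_zeta, A.tau_psi]
  ring

lemma tau_Pm (X : V) : A.tau (A.Pm X) = 0 := by
  simp only [Pm, A.tau_smul, A.tau_sub, A.tau_smul, A.tau_zeta, A.tau_psi]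
  ring

lemma psi_Pp (X : V) : A.psi (A.Pp X) = A.Pp X := by
  simp only [Pp, A.psi_smul, A.psi_add, A.psi_sub, A.psi_smul, A.psi_zeta, A.psi_psi,
    smul_zero]
  module

lemma psi_Pm (X : V) : A.psi (A.Pm X) = - A.Pm X := by
  simp only [Pm, A.psi_smul, A.psi_sub, A.psi_smul, A.psi_zeta, A.psi_psi, smul_zero]
  module

lemma Pp_add (X Y : V) : A.Pp (X + Y) = A.Pp X + A.Pp Y := by
  simp only [Pp, A.tau_add, A.psi_add]
  module

lemma Pm_add (X Y : V) : A.Pm (X + Y) = A.Pm X + A.Pm Y := by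
  simp only [Pm, A.tau_add, A.psi_add]
  module

lemma Pp_smul (f : F) (X : V) : A.Pp (f • X) = f • A.Pp X := by
  simp only [Pp, A.tau_smul, A.psi_smul]
  module

lemma Pm_smul (f : F) (X : V) : A.Pm (f • X) = f • A.Pm X := by
  simp only [Pm, A.tau_smul, A.psi_smul]
  module

lemma Pp_neg (X : V) : A.Pp (-X) = - A.Pp X := by
  rw [← neg_one_smul F X, A.Pp_smul, neg_one_smul]

lemma Pm_neg (X : V) : A.Pm (-X) = - A.Pm X := by
  rw [← neg_one_smul F X, A.Pm_smul, neg_one_smul]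

lemma Pp_zero : A.Pp 0 = 0 := by
  simp only [Pp, A.tau_zero, A.psi_zero, zero_smul]
  simp

lemma Pm_zero : A.Pm 0 = 0 := by
  simp only [Pm, A.tau_zero, A.psi_zero, zero_smul]
  simp

lemma Pp_zeta : A.Pp A.zeta = 0 := by
  simp only [Pp, A.tau_zeta, A.psi_zeta, one_smul]
  simp

lemma Pm_zeta : A.Pm A.zeta = 0 := by
  simp only [Pm, A.tau_zeta, A.psi_zeta, one_smul]
  simp

lemma Pp_Pp (X : V) : A.Pp (A.Pp X) = A.Pp X := by
  conv_lhs => rw [Pp, A.tau_Pp, A.psi_Pp, zero_smul, sub_zero]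
  exact hf_two _

lemma Pm_Pm (X : V) : A.Pm (A.Pm X) = A.Pm X := by
  conv_lhs => rw [Pm, A.tau_Pm, A.psi_Pm, zero_smul, sub_zero, sub_neg_eq_add]
  exact hf_two _

lemma Pp_psi (X : V) : A.Pp (A.psi X) = A.Pp X := by
  simp only [Pp, A.tau_psi, zero_smul, sub_zero, A.psi_psi]
  module

lemma Pm_psi (X : V) : A.Pm (A.psi X) = - A.Pm X := by
  simp only [Pm, A.tau_psi, zero_smul, sub_zero, A.psi_psi]
  module

lemma Pp_add_Pm (X : V) : A.Pp X + A.Pm X + A.tau X • A.zeta = X := by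
  rw [Pp, Pm, hf_combine]
  abel

lemma g_PpPp (X Y : V) : A.g (A.Pp X) (A.Pp Y) = 0 := by
  have h := A.g_psi_psi (A.Pp X) (A.Pp Y)
  rw [A.psi_Pp, A.psi_Pp, A.tau_Pp, A.tau_Pp, zero_mul, add_zero] at h
  apply half_cancel
  linear_combination h

lemma g_PmPm (X Y : V) : A.g (A.Pm X) (A.Pm Y) = 0 := by
  have h := A.g_psi_psi (A.Pm X) (A.Pm Y)
  rw [A.psi_Pm, A.psi_Pm, A.tau_Pm, A.tau_Pm, zero_mul, add_zero,
    A.g_negX, A.g_negY, neg_neg] at h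
  apply half_cancel
  linear_combination h

lemma g_psi_Pm (X Z : V) : A.g (A.psi X) (A.Pm Z) = A.g X (A.Pm Z) := by
  have h := A.g_psi_psi X (A.Pm Z)
  rw [A.psi_Pm, A.tau_Pm, mul_zero, add_zero, A.g_negY] at h
  linear_combination -h

lemma g_psi_Pp (X Z : V) : A.g (A.psi X) (A.Pp Z) = - A.g X (A.Pp Z) := by
  have h := A.g_psi_psi X (A.Pp Z)
  rw [A.psi_Pp, A.tau_Pp, mul_zero, add_zero] at h
  linear_combination h

lemma g_Pp_Pm (X Z : V) : A.g (A.Pp X) (A.Pm Z) = A.g X (A.Pm Z) := by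
  conv_lhs => rw [Pp]
  rw [A.g_smulX, A.g_addX, A.g_subX, A.g_smulX, A.g_zeta_left, A.tau_Pm,
    A.g_psi_Pm]
  linear_combination A.g X (A.Pm Z) * hf_add_hf (F := F)

lemma g_Pm_Pp (X Z : V) : A.g (A.Pm X) (A.Pp Z) = A.g X (A.Pp Z) := by
  conv_lhs => rw [Pm]
  rw [A.g_smulX, A.g_subX, A.g_subX, A.g_smulX, A.g_zeta_left, A.tau_Pp,
    A.g_psi_Pp]
  linear_combination A.g X (A.Pp Z) * hf_add_hf (F := F)

lemma g_Pp_any (U Z : V) : A.g (A.Pp U) Z = A.g U (A.Pm Z) := by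
  conv_lhs => rw [← A.Pp_add_Pm Z]
  rw [A.g_addY, A.g_addY, A.g_smulY, A.g_PpPp, A.g_Pp_Pm, A.g_zeta_right, A.tau_Pp]
  ring

lemma g_Pm_any (U Z : V) : A.g (A.Pm U) Z = A.g U (A.Pp Z) := by
  conv_lhs => rw [← A.Pp_add_Pm Z]
  rw [A.g_addY, A.g_addY, A.g_smulY, A.g_PmPm, A.g_Pm_Pp, A.g_zeta_right, A.tau_Pm]
  ring

lemma g_any_Pp (Y U : V) : A.g Y (A.Pp U) = A.g (A.Pm Y) U := by
  rw [A.g_symm, A.g_Pp_any, A.g_symm, A.g_Pm_any, A.g_symm]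

lemma g_any_Pm (Y U : V) : A.g Y (A.Pm U) = A.g (A.Pp Y) U := by
  rw [A.g_symm, A.g_Pm_any, A.g_symm, A.g_Pp_any, A.g_symm]

lemma g_decomp (Y Z : V) :
    A.g Y Z = A.g (A.Pp Y) (A.Pm Z) + A.g (A.Pm Y) (A.Pp Z) + A.tau Y * A.tau Z := by
  conv_lhs => rw [← A.Pp_add_Pm Y]
  rw [A.g_addX, A.g_addX, A.g_smulX, A.g_zeta_left, A.g_Pp_any, A.g_Pm_any,
    ← A.g_Pp_Pm, ← A.g_Pm_Pp]

/-- The parallelizing connection. -/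
def Dc (X Y : V) : V :=
  A.Pp (A.nabla X (A.Pp Y)) + A.Pm (A.nabla X (A.Pm Y)) + A.D X (A.tau Y) • A.zeta

lemma Dc_addX (X Y Z : V) : A.Dc (X + Y) Z = A.Dc X Z + A.Dc Y Z := by
  simp only [Dc, A.nabla_addX, A.Pp_add, A.Pm_add, A.D_addX, add_smul]
  abel

lemma Dc_smulX (f : F) (X Y : V) : A.Dc (f • X) Y = f • A.Dc X Y := by
  simp only [Dc, A.nabla_smulX, A.Pp_smul, A.Pm_smul, A.D_smulX, smul_add, mul_smul]

lemma Dc_addY (X Y Z : V) : A.Dc X (Y + Z) = A.Dc X Y + A.Dc X Z := by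
  simp only [Dc, A.Pp_add, A.Pm_add, A.nabla_addY, A.tau_add, A.D_add, add_smul]
  abel

lemma Dc_leibniz (X : V) (f : F) (Y : V) :
    A.Dc X (f • Y) = A.D X f • Y + f • A.Dc X Y := by
  simp only [Dc, A.Pp_smul, A.Pm_smul, A.nabla_leibniz, A.Pp_add, A.Pm_add,
    A.Pp_Pp, A.Pm_Pm, A.tau_smul, A.D_mul]
  linear_combination (norm := module) (A.D X f) • (A.Pp_add_Pm Y)

lemma Dc_zeta (X : V) : A.Dc X A.zeta = 0 := by
  simp [Dc, A.Pp_zeta, A.Pm_zeta, A.nabla_zeroY, A.Pp_zero, A.Pm_zero, A.tau_zeta,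
    A.D_one]

lemma Dc_psi (X Y : V) : A.Dc X (A.psi Y) = A.psi (A.Dc X Y) := by
  simp only [Dc]
  rw [A.Pp_psi, A.Pm_psi, A.nabla_negY, A.Pm_neg, A.tau_psi, A.D_zero, zero_smul,
    add_zero]
  rw [A.psi_add, A.psi_add, A.psi_smul, A.psi_zeta, smul_zero, add_zero,
    A.psi_Pp, A.psi_Pm]


lemma Dc_tau (X Y : V) : A.D X (A.tau Y) = A.tau (A.Dc X Y) := by
  simp only [Dc, A.tau_add, A.tau_Pp, A.tau_Pm, A.tau_smul, A.tau_zeta]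
  ring

lemma Dc_metric (X Y Z : V) :
    A.D X (A.g Y Z) = A.g (A.Dc X Y) Z + A.g Y (A.Dc X Z) := by
  have h1 := A.nabla_metric X (A.Pp Y) (A.Pm Z)
  have h2 := A.nabla_metric X (A.Pm Y) (A.Pp Z)
  have e1 : A.g (A.Dc X Y) Z
      = A.g (A.nabla X (A.Pp Y)) (A.Pm Z) + A.g (A.nabla X (A.Pm Y)) (A.Pp Z)
        + A.D X (A.tau Y) * A.tau Z := by
    rw [Dc, A.g_addX, A.g_addX, A.g_smulX, A.g_Pp_any, A.g_Pm_any, A.g_zeta_left]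
  have e2 : A.g Y (A.Dc X Z)
      = A.g (A.Pp Y) (A.nabla X (A.Pm Z)) + A.g (A.Pm Y) (A.nabla X (A.Pp Z))
        + A.D X (A.tau Z) * A.tau Y := by
    rw [Dc, A.g_addY, A.g_addY, A.g_smulY, A.g_any_Pp, A.g_any_Pm, A.g_zeta_right]
    ring
  rw [A.g_decomp Y Z, A.D_add, A.D_add, A.D_mul, h1, h2, e1, e2]
  ring

end APCMS

/-- Let `M` be an almost paracontact metric manifold which is a
para-CR manifold (equivalently `τ`-normal) with autoparallel Reeb vector field
(`∇_ζ ζ = 0`). Then there exists a linear connection `∇̃` on `M` making the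
almost paracontact metric structure parallel: `∇̃ψ = 0`, `∇̃ζ = 0`, `∇̃τ = 0`,
`∇̃g = 0`. -/
theorem exists_parallelization_of_paraCR
    {F V : Type*} [CommRing F] [Algebra ℝ F]
    [LieRing V] [Module F V] [Module ℝ V] [IsScalarTower ℝ F V]
    (A : APCMS F V) (hCR : A.ParaCR) (hauto : A.nabla A.zeta A.zeta = 0) :
    ∃ Dc : V → V → V, A.IsParallelization Dc := by
  exact ⟨A.Dc, ⟨A.Dc_addX, A.Dc_smulX, A.Dc_addY, A.Dc_leibniz⟩,
    A.Dc_psi, A.Dc_zeta, A.Dc_tau, A.Dc_metric⟩
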